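/- For every r with 1 ≤ r ≤ N and all î, ĵ ∈ {3, …, n+2}, the component of the (r−1)-st covariant derivative of the curvature of the metric G with all r−1 differentiation indices equal to n+3 satisfies, at the origin 0 ∈ ℝ^{n+4}: R^î_{ĵ, n+3, n+4; n+3; …; n+3}(0) = r! (A_r)_{î−2, ĵ−2} (with r−1 occurrences of the index n+3 after the semicolon). -/

import Mathlib

namespace HolPaper

open Matrix

/-- Points of `ℝ^{n+4}`, with coordinates indexed by `Fin (n+4)`.
The paper's index `1` is `p1`, `2` is `p2`, `î ∈ {3,…,n+2}` is `ehat i` for `i : Fin n`,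
`n+3` is `q1` and `n+4` is `q2`. -/
abbrev Pt (n : ℕ) := Fin (n + 4) → ℝ

def p1 (n : ℕ) : Fin (n + 4) := ⟨0, by omega⟩
def p2 (n : ℕ) : Fin (n + 4) := ⟨1, by omega⟩
def ehat {n : ℕ} (i : Fin n) : Fin (n + 4) := ⟨i.1 + 2, by have := i.isLt; omega⟩
def q1 (n : ℕ) : Fin (n + 4) := ⟨n + 2, by omega⟩
def q2 (n : ℕ) : Fin (n + 4) := ⟨n + 3, by omega⟩

noncomputable section

variable {n N : ℕ}

/-- `u^î(x) = Σ_ĵ Σ_α (A_α)_{î-2,ĵ-2} x^ĵ (x^{n+3})^α`. -/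
def u (A : Fin N → Matrix (Fin n) (Fin n) ℝ) (i : Fin n) (x : Pt n) : ℝ :=
  ∑ j : Fin n, ∑ α : Fin N, A α i j * x (ehat j) * x (q1 n) ^ (α.1 + 1)

/-- `F(x) = Σ_î (x^î)²`. -/
def Fq (n : ℕ) (x : Pt n) : ℝ := ∑ i : Fin n, x (ehat i) ^ 2

/-- The Gram matrix `G(x)` of the metric. -/
def Gmet (A : Fin N → Matrix (Fin n) (Fin n) ℝ) (x : Pt n) :
    Matrix (Fin (n + 4)) (Fin (n + 4)) ℝ := fun a b =>
  (if (a = p1 n ∧ b = q1 n) ∨ (a = q1 n ∧ b = p1 n) then (1 : ℝ) else 0)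
  + (if (a = p2 n ∧ b = q2 n) ∨ (a = q2 n ∧ b = p2 n) then (1 : ℝ) else 0)
  + (∑ i : Fin n, if a = ehat i ∧ b = ehat i then (1 : ℝ) else 0)
  + (∑ i : Fin n, if (a = ehat i ∧ b = q2 n) ∨ (a = q2 n ∧ b = ehat i) then u A i x else 0)
  + (if (a = q1 n ∧ b = q1 n) ∨ (a = q2 n ∧ b = q2 n) then Fq n x else 0)

/-- Partial derivative `∂_b f` of a function on `ℝ^{n+4}`. -/
def pd (b : Fin (n + 4)) (f : Pt n → ℝ) (x : Pt n) : ℝ :=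
  fderiv ℝ f x (Pi.single b 1)

/-- Christoffel symbols
`Γ^a_{bc} = ½ Σ_d G^{ad} (∂_b G_{dc} + ∂_c G_{bd} − ∂_d G_{bc})`. -/
def Γchr (A : Fin N → Matrix (Fin n) (Fin n) ℝ) (a b c : Fin (n + 4)) (x : Pt n) : ℝ :=
  (1 / 2) * ∑ d : Fin (n + 4), (Gmet A x)⁻¹ a d *
    (pd b (fun y => Gmet A y d c) x + pd c (fun y => Gmet A y b d) x
      - pd d (fun y => Gmet A y b c) x)

/-- Curvature components
`R^a_{b,c,d} = ∂_c Γ^a_{db} − ∂_d Γ^a_{cb} + Σ_e (Γ^a_{ce} Γ^e_{db} − Γ^a_{de} Γ^e_{cb})`. -/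
def Rcurv (A : Fin N → Matrix (Fin n) (Fin n) ℝ) (a b c d : Fin (n + 4)) (x : Pt n) : ℝ :=
  pd c (Γchr A a d b) x - pd d (Γchr A a c b) x
  + ∑ e : Fin (n + 4), (Γchr A a c e x * Γchr A e d b x - Γchr A a d e x * Γchr A e c b x)

/-- Auxiliary recursion for iterated covariant derivatives of the curvature; the list of
differentiation indices is stored in *reverse* order (most recent derivative first). -/
def covRAux (A : Fin N → Matrix (Fin n) (Fin n) ℝ) :
    Fin (n + 4) → Fin (n + 4) → Fin (n + 4) → Fin (n + 4) → List (Fin (n + 4)) → Pt n → ℝ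
  | a, b, c, d, [], x => Rcurv A a b c d x
  | a, b, c, d, f :: fs, x =>
      pd f (covRAux A a b c d fs) x
      + ∑ l : Fin (n + 4), Γchr A a f l x * covRAux A l b c d fs x
      - ∑ l : Fin (n + 4), Γchr A l f b x * covRAux A a l c d fs x
      - ∑ l : Fin (n + 4), Γchr A l f c x * covRAux A a b l d fs x
      - ∑ l : Fin (n + 4), Γchr A l f d x * covRAux A a b c l fs x
      - ∑ s : Fin fs.length, ∑ l : Fin (n + 4),
          Γchr A l f (fs.get s) x * covRAux A a b c d (fs.set s l) x
  termination_by a b c d fs => fs.length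
  decreasing_by all_goals simp [List.length_set]

/-- `covR A a b c d [f_1, …, f_r] x` is the component `R^a_{b,c,d;f_1;…;f_r}(x)` of the
`r`-th covariant derivative of the curvature tensor (indices in natural order). -/
def covR (A : Fin N → Matrix (Fin n) (Fin n) ℝ) (a b c d : Fin (n + 4))
    (fs : List (Fin (n + 4))) (x : Pt n) : ℝ :=
  covRAux A a b c d fs.reverse x



section Idx
variable {n : ℕ}

@[simp] lemma ehat_inj {i j : Fin n} : (ehat i : Fin (n+4)) = ehat j ↔ i = j := by
  constructor
  · intro h; exact Fin.ext (by have := congrArg Fin.val h; simpa [ehat] using this)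
  · rintro rfl; rfl

@[simp] lemma p1_ne_p2 : (p1 n) ≠ p2 n := by simp [p1, p2, Fin.ext_iff]
@[simp] lemma p2_ne_p1 : (p2 n) ≠ p1 n := by simp [p1, p2, Fin.ext_iff]
@[simp] lemma p1_ne_q1 : (p1 n) ≠ q1 n := by simp [p1, q1, Fin.ext_iff]
@[simp] lemma q1_ne_p1 : (q1 n) ≠ p1 n := by simp [p1, q1, Fin.ext_iff]
@[simp] lemma p1_ne_q2 : (p1 n) ≠ q2 n := by simp [p1, q2, Fin.ext_iff]
@[simp] lemma q2_ne_p1 : (q2 n) ≠ p1 n := by simp [p1, q2, Fin.ext_iff]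
@[simp] lemma p2_ne_q1 : (p2 n) ≠ q1 n := by simp [p2, q1, Fin.ext_iff]
@[simp] lemma q1_ne_p2 : (q1 n) ≠ p2 n := by simp [p2, q1, Fin.ext_iff]
@[simp] lemma p2_ne_q2 : (p2 n) ≠ q2 n := by simp [p2, q2, Fin.ext_iff]
@[simp] lemma q2_ne_p2 : (q2 n) ≠ p2 n := by simp [p2, q2, Fin.ext_iff]
@[simp] lemma q1_ne_q2 : (q1 n) ≠ q2 n := by simp [q1, q2, Fin.ext_iff]
@[simp] lemma q2_ne_q1 : (q2 n) ≠ q1 n := by simp [q1, q2, Fin.ext_iff]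
@[simp] lemma ehat_ne_p1 (i : Fin n) : ehat i ≠ p1 n := by simp [ehat, p1, Fin.ext_iff]
@[simp] lemma p1_ne_ehat (i : Fin n) : p1 n ≠ ehat i := by simp [ehat, p1, Fin.ext_iff]
@[simp] lemma ehat_ne_p2 (i : Fin n) : ehat i ≠ p2 n := by simp [ehat, p2, Fin.ext_iff]
@[simp] lemma p2_ne_ehat (i : Fin n) : p2 n ≠ ehat i := by simp [ehat, p2, Fin.ext_iff]
@[simp] lemma ehat_ne_q1 (i : Fin n) : ehat i ≠ q1 n := by
  have := i.isLt; simp [ehat, q1, Fin.ext_iff]; omega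
@[simp] lemma q1_ne_ehat (i : Fin n) : q1 n ≠ ehat i := (ehat_ne_q1 i).symm
@[simp] lemma ehat_ne_q2 (i : Fin n) : ehat i ≠ q2 n := by
  have := i.isLt; simp [ehat, q2, Fin.ext_iff]; omega
@[simp] lemma q2_ne_ehat (i : Fin n) : q2 n ≠ ehat i := (ehat_ne_q2 i).symm

lemma cases5 (a : Fin (n+4)) :
    a = p1 n ∨ a = p2 n ∨ a = q1 n ∨ a = q2 n ∨ ∃ i : Fin n, a = ehat i := by
  rcases a with ⟨v, hv⟩
  by_cases h0 : v = 0
  · exact Or.inl (by simp [p1, Fin.ext_iff, h0])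
  by_cases h1 : v = 1
  · exact Or.inr (Or.inl (by simp [p2, Fin.ext_iff, h1]))
  by_cases h2 : v = n + 2
  · exact Or.inr (Or.inr (Or.inl (by simp [q1, Fin.ext_iff, h2])))
  by_cases h3 : v = n + 3
  · exact Or.inr (Or.inr (Or.inr (Or.inl (by simp [q2, Fin.ext_iff, h3]))))
  · exact Or.inr (Or.inr (Or.inr (Or.inr ⟨⟨v - 2, by omega⟩, by simp [ehat, Fin.ext_iff]; omega⟩)))

lemma univ_eq : (Finset.univ : Finset (Fin (n+4))) =
    insert (p1 n) (insert (p2 n) (insert (q1 n) (insert (q2 n)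
      (Finset.image ehat Finset.univ)))) := by
  ext a
  simp only [Finset.mem_univ, true_iff, Finset.mem_insert, Finset.mem_image]
  rcases cases5 a with h | h | h | h | ⟨i, h⟩ <;> subst h <;> simp

lemma sum_split {M : Type*} [AddCommMonoid M] (f : Fin (n+4) → M) :
    ∑ a, f a = f (p1 n) + f (p2 n) + (∑ i, f (ehat i)) + f (q1 n) + f (q2 n) := by
  rw [univ_eq]
  rw [Finset.sum_insert (by simp), Finset.sum_insert (by simp), Finset.sum_insert (by simp),
    Finset.sum_insert (by simp), Finset.sum_image (fun a _ b _ h => ehat_inj.mp h)]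
  abel

end Idx
section Inv
variable {n N : ℕ} (A : Fin N → Matrix (Fin n) (Fin n) ℝ) (x : Pt n)

lemma Gmet_p1 (b) : Gmet A x (p1 n) b = if b = q1 n then 1 else 0 := by
  simp [Gmet]
lemma Gmet_p2 (b) : Gmet A x (p2 n) b = if b = q2 n then 1 else 0 := by
  simp [Gmet]
lemma Gmet_ehat (i : Fin n) (b) : Gmet A x (ehat i) b =
    (if b = ehat i then 1 else 0) + (if b = q2 n then u A i x else 0) := by
  simp [Gmet, ite_and, Finset.sum_ite_eq]
lemma Gmet_q1 (b) : Gmet A x (q1 n) b =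
    (if b = p1 n then 1 else 0) + (if b = q1 n then Fq n x else 0) := by
  simp [Gmet]
lemma Gmet_q2 (b) : Gmet A x (q2 n) b =
    (if b = p2 n then 1 else 0) + (∑ i, if b = ehat i then u A i x else 0)
      + (if b = q2 n then Fq n x else 0) := by
  simp [Gmet]

end Inv

section Inv2
variable {n N : ℕ} (A : Fin N → Matrix (Fin n) (Fin n) ℝ) (x : Pt n)

/-- Explicit inverse of `Gmet`. -/
def Ginv (A : Fin N → Matrix (Fin n) (Fin n) ℝ) (x : Pt n) :
    Matrix (Fin (n + 4)) (Fin (n + 4)) ℝ := fun a b =>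
  (if (a = p1 n ∧ b = q1 n) ∨ (a = q1 n ∧ b = p1 n) then (1 : ℝ) else 0)
  + (if (a = p2 n ∧ b = q2 n) ∨ (a = q2 n ∧ b = p2 n) then (1 : ℝ) else 0)
  + (∑ i : Fin n, if a = ehat i ∧ b = ehat i then (1 : ℝ) else 0)
  - (∑ i : Fin n, if (a = ehat i ∧ b = p2 n) ∨ (a = p2 n ∧ b = ehat i) then u A i x else 0)
  - (if a = p1 n ∧ b = p1 n then Fq n x else 0)
  + (if a = p2 n ∧ b = p2 n then (∑ i : Fin n, u A i x ^ 2) - Fq n x else 0)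

lemma Ginv_p1 (b) : Ginv A x (p1 n) b =
    (if b = q1 n then 1 else 0) - (if b = p1 n then Fq n x else 0) := by
  simp [Ginv]
lemma Ginv_p2 (b) : Ginv A x (p2 n) b =
    (if b = q2 n then 1 else 0) - (∑ i, if b = ehat i then u A i x else 0)
      + (if b = p2 n then (∑ i : Fin n, u A i x ^ 2) - Fq n x else 0) := by
  simp [Ginv]
lemma Ginv_ehat (i : Fin n) (b) : Ginv A x (ehat i) b =
    (if b = ehat i then 1 else 0) - (if b = p2 n then u A i x else 0) := by
  simp [Ginv, ite_and, Finset.sum_ite_eq]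
lemma Ginv_q1 (b) : Ginv A x (q1 n) b = if b = p1 n then 1 else 0 := by
  simp [Ginv]
lemma Ginv_q2 (b) : Ginv A x (q2 n) b = if b = p2 n then 1 else 0 := by
  simp [Ginv]

lemma Gmet_mul_Ginv : Gmet A x * Ginv A x = 1 := by
  ext a b
  rw [Matrix.mul_apply]
  rcases cases5 a with h | h | h | h | ⟨i, h⟩ <;> subst h
  · rw [sum_split (fun c => Gmet A x (p1 n) c * Ginv A x c b)]
    simp [Gmet_p1, Ginv_q1, Matrix.one_apply, eq_comm]
  · rw [sum_split (fun c => Gmet A x (p2 n) c * Ginv A x c b)]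
    simp [Gmet_p2, Ginv_q2, Matrix.one_apply, eq_comm]
  · rw [sum_split (fun c => Gmet A x (q1 n) c * Ginv A x c b)]
    simp only [Gmet_q1, Ginv_p1, Ginv_q1, Matrix.one_apply]
    simp [eq_comm]
  · rw [sum_split (fun c => Gmet A x (q2 n) c * Ginv A x c b)]
    simp only [Gmet_q2, Ginv_p2, Ginv_ehat, Ginv_q2, Matrix.one_apply]
    simp [ehat_inj, Finset.sum_ite_eq, Finset.sum_sub_distrib, Finset.mul_sum, mul_ite,
      ite_mul, mul_sub, eq_comm, sub_mul]
    by_cases hb : b = p2 n <;> simp [hb, sq] <;> ring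
  · rw [sum_split (fun c => Gmet A x (ehat i) c * Ginv A x c b)]
    simp only [Gmet_ehat, Ginv_p1, Ginv_p2, Ginv_ehat, Ginv_q1, Ginv_q2, Matrix.one_apply]
    simp [eq_comm, Finset.sum_sub_distrib, Finset.mul_sum, mul_ite, ite_mul,
      Finset.sum_ite_eq, Finset.sum_ite_eq']

end Inv2

lemma Gmet_inv_eq {n N : ℕ} (A : Fin N → Matrix (Fin n) (Fin n) ℝ) (x : Pt n) :
    (Gmet A x)⁻¹ = Ginv A x := Matrix.inv_eq_right_inv (Gmet_mul_Ginv A x)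
section Calc
variable {n N : ℕ} (A : Fin N → Matrix (Fin n) (Fin n) ℝ)

/-- Coordinate projection as a continuous linear map. -/
def prj (e : Fin (n+4)) : Pt n →L[ℝ] ℝ := ContinuousLinearMap.proj e

lemma hasFDerivAt_coord (e : Fin (n+4)) (x : Pt n) :
    HasFDerivAt (fun y : Pt n => y e) (prj e) x := (prj e).hasFDerivAt

@[simp] lemma prj_single (e b : Fin (n+4)) :
    prj (n := n) e (Pi.single b 1) = if e = b then 1 else 0 := by
  simp [prj, Pi.single_apply]

lemma contDiff_coord (e : Fin (n+4)) : ContDiff ℝ (⊤ : ℕ∞) (fun y : Pt n => y e) :=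
  (prj e).contDiff

/-- `∂_ĵ u^î` as a function of `x`; depends only on `x^{n+3}`. -/
def Bfun (i j : Fin n) (x : Pt n) : ℝ := ∑ α : Fin N, A α i j * x (q1 n) ^ (α.1 + 1)

/-- `∂_t u^î` as a function of `x`. -/
def ut (i : Fin n) (x : Pt n) : ℝ :=
  ∑ j : Fin n, x (ehat j) * (∑ α : Fin N, A α i j * (α.1 + 1) * x (q1 n) ^ α.1)

lemma contDiff_Bfun (i j : Fin n) : ContDiff ℝ (⊤ : ℕ∞) (Bfun A i j) :=
  ContDiff.sum fun α _ => (contDiff_const.mul ((contDiff_coord (q1 n)).pow _))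

lemma contDiff_ut (i : Fin n) : ContDiff ℝ (⊤ : ℕ∞) (ut A i) :=
  ContDiff.sum fun j _ => (contDiff_coord (ehat j)).mul
    (ContDiff.sum fun α _ => contDiff_const.mul ((contDiff_coord (q1 n)).pow _))

lemma contDiff_u (i : Fin n) : ContDiff ℝ (⊤ : ℕ∞) (u A i) :=
  ContDiff.sum fun j _ => ContDiff.sum fun α _ =>
    (contDiff_const.mul (contDiff_coord (ehat j))).mul ((contDiff_coord (q1 n)).pow _)

lemma contDiff_Fq : ContDiff ℝ (⊤ : ℕ∞) (Fq n) :=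
  ContDiff.sum fun i _ => (contDiff_coord (ehat i)).pow 2

lemma hasFDerivAt_coord_pow (e : Fin (n+4)) (k : ℕ) (x : Pt n) :
    HasFDerivAt (fun y : Pt n => y e ^ k) (((k : ℝ) * x e ^ (k - 1)) • prj e) x := by
  simpa [Function.comp_def] using
    (hasDerivAt_pow k (x e)).comp_hasFDerivAt x (hasFDerivAt_coord e x)

lemma hasFDerivAt_u (i : Fin n) (x : Pt n) :
    HasFDerivAt (u A i)
      (∑ j : Fin n, ∑ α : Fin N,
        ((A α i j * x (ehat j)) • ((((α.1 + 1 : ℕ) : ℝ) * x (q1 n) ^ (α.1 + 1 - 1)) • prj (q1 n))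
          + (x (q1 n) ^ (α.1 + 1)) • ((A α i j) • prj (ehat j)))) x := by
  apply HasFDerivAt.fun_sum; intro j _
  apply HasFDerivAt.fun_sum; intro α _
  exact ((hasFDerivAt_coord (ehat j) x).const_mul (A α i j)).mul
    (hasFDerivAt_coord_pow (q1 n) (α.1 + 1) x)

lemma hasFDerivAt_Fq (x : Pt n) :
    HasFDerivAt (Fq n)
      (∑ i : Fin n, (((2 : ℕ) : ℝ) * x (ehat i) ^ (2 - 1)) • prj (ehat i)) x := by
  apply HasFDerivAt.fun_sum; intro i _
  exact hasFDerivAt_coord_pow (ehat i) 2 x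

lemma pd_u (i : Fin n) (b : Fin (n+4)) (x : Pt n) :
    pd b (u A i) x = (∑ j, if b = ehat j then Bfun A i j x else 0)
      + (if b = q1 n then ut A i x else 0) := by
  have h := (hasFDerivAt_u A i x).fderiv
  simp only [pd, h, ContinuousLinearMap.sum_apply, ContinuousLinearMap.add_apply,
    ContinuousLinearMap.smul_apply, prj_single, smul_eq_mul]
  rcases cases5 b with hb | hb | hb | hb | ⟨k, hb⟩ <;> subst hb <;>
    simp [Bfun, ut, Finset.mul_sum, Finset.sum_ite_eq, Finset.sum_ite_eq', eq_comm]
  · exact Finset.sum_congr rfl fun j _ => Finset.sum_congr rfl fun α _ => by push_cast; ring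
  · exact Finset.sum_congr rfl fun α _ => by ring

lemma pd_Fq (b : Fin (n+4)) (x : Pt n) :
    pd b (Fq n) x = ∑ k, if b = ehat k then 2 * x (ehat k) else 0 := by
  have h := (hasFDerivAt_Fq x).fderiv
  simp only [pd, h, ContinuousLinearMap.sum_apply, ContinuousLinearMap.smul_apply,
    prj_single, smul_eq_mul]
  rcases cases5 b with hb | hb | hb | hb | ⟨k, hb⟩ <;> subst hb <;>
    simp [Finset.sum_ite_eq, Finset.sum_ite_eq', eq_comm] <;> ring

end Calc
section PdAlg
variable {n : ℕ} {f g : Pt n → ℝ} {b : Fin (n+4)} {x : Pt n}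

lemma pd_add (hf : DifferentiableAt ℝ f x) (hg : DifferentiableAt ℝ g x) :
    pd b (fun y => f y + g y) x = pd b f x + pd b g x := by
  simp [pd, fderiv_fun_add hf hg]

lemma pd_sub (hf : DifferentiableAt ℝ f x) (hg : DifferentiableAt ℝ g x) :
    pd b (fun y => f y - g y) x = pd b f x - pd b g x := by
  simp [pd, fderiv_fun_sub hf hg]

lemma pd_const (c : ℝ) : pd b (fun _ => c) x = 0 := by simp [pd]

lemma pd_const_mul (hf : DifferentiableAt ℝ f x) (c : ℝ) :
    pd b (fun y => c * f y) x = c * pd b f x := by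
  simp [pd, fderiv_const_mul hf]

lemma pd_mul (hf : DifferentiableAt ℝ f x) (hg : DifferentiableAt ℝ g x) :
    pd b (fun y => f y * g y) x = f x * pd b g x + g x * pd b f x := by
  simp [pd, fderiv_fun_mul hf hg]

lemma pd_sum {ι : Type*} (s : Finset ι) {F : ι → Pt n → ℝ}
    (h : ∀ i ∈ s, DifferentiableAt ℝ (F i) x) :
    pd b (fun y => ∑ i ∈ s, F i y) x = ∑ i ∈ s, pd b (F i) x := by
  simp [pd, fderiv_fun_sum h]

lemma pd_coord (e : Fin (n+4)) : pd b (fun y : Pt n => y e) x = if e = b then 1 else 0 := by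
  simp [pd, (hasFDerivAt_coord e x).fderiv]

lemma contDiff_pd (hf : ContDiff ℝ (⊤ : ℕ∞) f) : ContDiff ℝ (⊤ : ℕ∞) (pd b f) := by
  have h1 : ContDiff ℝ (⊤ : ℕ∞) (fderiv ℝ f) := hf.fderiv_right (mod_cast le_top)
  exact (ContinuousLinearMap.apply ℝ ℝ (Pi.single b 1)).contDiff.comp h1

lemma cdAt (hf : ContDiff ℝ (⊤ : ℕ∞) f) : DifferentiableAt ℝ f x :=
  (hf.differentiable (by simp)).differentiableAt

end PdAlg

section PG
variable {n N : ℕ} (A : Fin N → Matrix (Fin n) (Fin n) ℝ)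

/-- Explicit formula for `∂_b G_{dc}`. -/
def pg (b d c : Fin (n+4)) (x : Pt n) : ℝ :=
  (∑ i : Fin n, (if (d = ehat i ∧ c = q2 n) ∨ (d = q2 n ∧ c = ehat i) then (1:ℝ) else 0) *
    ((∑ j, if b = ehat j then Bfun A i j x else 0) + (if b = q1 n then ut A i x else 0)))
  + (if (d = q1 n ∧ c = q1 n) ∨ (d = q2 n ∧ c = q2 n) then (1:ℝ) else 0) *
      (∑ k, if b = ehat k then 2 * x (ehat k) else 0)

lemma contDiff_pg (b d c : Fin (n+4)) : ContDiff ℝ (⊤ : ℕ∞) (pg A b d c) := by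
  apply ContDiff.add
  · exact ContDiff.sum fun i _ => contDiff_const.mul
      ((ContDiff.sum fun j _ => by
        split <;> [exact contDiff_Bfun A i j; exact contDiff_const]).add
        (by split <;> [exact contDiff_ut A i; exact contDiff_const]))
  · exact contDiff_const.mul (ContDiff.sum fun k _ => by
      split <;> [exact contDiff_const.mul (contDiff_coord (ehat k)); exact contDiff_const])

lemma pd_Gmet (b d c : Fin (n+4)) (x : Pt n) :
    pd b (fun y => Gmet A y d c) x = pg A b d c x := by
  have hrw : (fun y => Gmet A y d c) = fun y =>
      ((if (d = p1 n ∧ c = q1 n) ∨ (d = q1 n ∧ c = p1 n) then (1:ℝ) else 0)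
        + (if (d = p2 n ∧ c = q2 n) ∨ (d = q2 n ∧ c = p2 n) then (1:ℝ) else 0)
        + (∑ i : Fin n, if d = ehat i ∧ c = ehat i then (1:ℝ) else 0))
      + ((∑ i : Fin n, (if (d = ehat i ∧ c = q2 n) ∨ (d = q2 n ∧ c = ehat i) then (1:ℝ) else 0)
            * u A i y)
        + (if (d = q1 n ∧ c = q1 n) ∨ (d = q2 n ∧ c = q2 n) then (1:ℝ) else 0) * Fq n y) := by
    funext y
    have hD : (∑ i : Fin n, if (d = ehat i ∧ c = q2 n) ∨ (d = q2 n ∧ c = ehat i)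
          then u A i y else 0)
        = ∑ i : Fin n, (if (d = ehat i ∧ c = q2 n) ∨ (d = q2 n ∧ c = ehat i) then (1:ℝ) else 0)
            * u A i y :=
      Finset.sum_congr rfl fun i _ => by split <;> simp
    have hE : (if (d = q1 n ∧ c = q1 n) ∨ (d = q2 n ∧ c = q2 n) then Fq n y else 0)
        = (if (d = q1 n ∧ c = q1 n) ∨ (d = q2 n ∧ c = q2 n) then (1:ℝ) else 0) * Fq n y := by
      split <;> simp
    simp only [Gmet, hD, hE]; ring
  rw [hrw]
  rw [pd_add (by exact differentiableAt_const _)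
      (cdAt ((ContDiff.sum fun (i : Fin n) _ => contDiff_const.mul (contDiff_u A i)).add
        (contDiff_const.mul contDiff_Fq))),
    pd_const,
    pd_add (cdAt (ContDiff.sum fun (i : Fin n) _ => contDiff_const.mul (contDiff_u A i)))
      (cdAt (contDiff_const.mul contDiff_Fq)),
    pd_sum _ (fun i _ => cdAt (contDiff_const.mul (contDiff_u A i))),
    pd_const_mul (cdAt contDiff_Fq)]
  simp only [pg, pd_Fq]
  rw [zero_add]
  congr 1
  refine Finset.sum_congr rfl fun i _ => ?_
  rw [pd_const_mul (cdAt (contDiff_u A i)), pd_u]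

lemma Γchr_eq (a b c : Fin (n+4)) : Γchr A a b c = fun x =>
    (1 / 2) * ∑ d : Fin (n + 4), Ginv A x a d *
      (pg A b d c x + pg A c b d x - pg A d b c x) := by
  funext x
  simp only [Γchr, Gmet_inv_eq, pd_Gmet]

lemma Γchr_eq' (a b c : Fin (n+4)) (x : Pt n) : Γchr A a b c x =
    (1 / 2) * ∑ d : Fin (n + 4), Ginv A x a d *
      (pg A b d c x + pg A c b d x - pg A d b c x) := congrFun (Γchr_eq A a b c) x

lemma contDiff_Ginv (a d : Fin (n+4)) : ContDiff ℝ (⊤ : ℕ∞) (fun x => Ginv A x a d) := by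
  apply ContDiff.add; apply ContDiff.sub; apply ContDiff.sub; apply ContDiff.add
  · apply ContDiff.add <;> exact contDiff_const
  · exact contDiff_const
  · exact ContDiff.sum fun i _ => by
      split <;> [exact contDiff_u A i; exact contDiff_const]
  · split <;> [exact contDiff_Fq; exact contDiff_const]
  · split
    · exact (ContDiff.sum fun i _ => (contDiff_u A i).pow 2).sub contDiff_Fq
    · exact contDiff_const

lemma contDiff_Γchr (a b c : Fin (n+4)) : ContDiff ℝ (⊤ : ℕ∞) (Γchr A a b c) := by
  rw [Γchr_eq]
  exact contDiff_const.mul (ContDiff.sum fun d _ => (contDiff_Ginv A a d).mul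
    (((contDiff_pg A b d c).add (contDiff_pg A c b d)).sub (contDiff_pg A d b c)))

end PG
section Jm
variable {n N : ℕ}

/-- Functions of the form `Σ_k x^{ehat k} h_k(x)` with smooth `h_k`: an ideal of functions
vanishing (with all their `q1`/`q2`-derivatives) on `{x | ∀ k, x (ehat k) = 0}`. -/
def Jmem (f : Pt n → ℝ) : Prop :=
  ∃ h : Fin n → Pt n → ℝ, (∀ k, ContDiff ℝ (⊤ : ℕ∞) (h k)) ∧
    f = fun x => ∑ k, x (ehat k) * h k x

lemma Jmem.contDiff {f : Pt n → ℝ} (hf : Jmem f) : ContDiff ℝ (⊤ : ℕ∞) f := by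
  obtain ⟨h, hsm, rfl⟩ := hf
  exact ContDiff.sum fun k _ => (contDiff_coord (ehat k)).mul (hsm k)

lemma Jmem.zero : Jmem (n := n) (fun _ => 0) :=
  ⟨fun _ _ => 0, fun _ => contDiff_const, by funext x; simp⟩

lemma Jmem.add {f g : Pt n → ℝ} (hf : Jmem f) (hg : Jmem g) : Jmem (fun x => f x + g x) := by
  obtain ⟨h1, hs1, rfl⟩ := hf; obtain ⟨h2, hs2, rfl⟩ := hg
  exact ⟨fun k x => h1 k x + h2 k x, fun k => (hs1 k).add (hs2 k), by
    funext x; simp [mul_add, Finset.sum_add_distrib]⟩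

lemma Jmem.neg {f : Pt n → ℝ} (hf : Jmem f) : Jmem (fun x => -f x) := by
  obtain ⟨h1, hs1, rfl⟩ := hf
  exact ⟨fun k x => -(h1 k x), fun k => (hs1 k).neg, by
    funext x; simp [Finset.sum_neg_distrib]⟩

lemma Jmem.sub {f g : Pt n → ℝ} (hf : Jmem f) (hg : Jmem g) : Jmem (fun x => f x - g x) := by
  simpa [sub_eq_add_neg] using hf.add hg.neg

lemma Jmem.mul_left {f g : Pt n → ℝ} (hg : ContDiff ℝ (⊤ : ℕ∞) g) (hf : Jmem f) :
    Jmem (fun x => g x * f x) := by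
  obtain ⟨h1, hs1, rfl⟩ := hf
  exact ⟨fun k x => g x * h1 k x, fun k => hg.mul (hs1 k), by
    funext x; rw [Finset.mul_sum]; exact Finset.sum_congr rfl fun k _ => by ring⟩

lemma Jmem.mul_right {f g : Pt n → ℝ} (hg : ContDiff ℝ (⊤ : ℕ∞) g) (hf : Jmem f) :
    Jmem (fun x => f x * g x) := by
  have := hf.mul_left hg
  simpa [mul_comm] using this

lemma Jmem.const_mul {f : Pt n → ℝ} (c : ℝ) (hf : Jmem f) : Jmem (fun x => c * f x) :=
  hf.mul_left contDiff_const

lemma Jmem.sum {ι : Type*} (s : Finset ι) {F : ι → Pt n → ℝ} (h : ∀ i ∈ s, Jmem (F i)) :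
    Jmem (fun x => ∑ i ∈ s, F i x) := by
  classical
  induction s using Finset.induction_on with
  | empty => simpa using Jmem.zero
  | @insert a s' hne ih =>
    have : Jmem (fun x => F a x + ∑ i ∈ s', F i x) :=
      (h a (by simp)).add (ih fun i hi => h i (by simp [hi]))
    simpa [Finset.sum_insert hne] using this

lemma Jmem_pd {f : Pt n → ℝ} {b : Fin (n+4)} (hb : ∀ k : Fin n, ehat k ≠ b)
    (hf : Jmem f) : Jmem (pd b f) := by
  obtain ⟨h1, hs1, rfl⟩ := hf
  refine ⟨fun k => pd b (h1 k), fun k => contDiff_pd (hs1 k), ?_⟩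
  funext x
  rw [pd_sum _ (fun k _ => cdAt ((contDiff_coord (ehat k)).mul (hs1 k)))]
  refine Finset.sum_congr rfl fun k _ => ?_
  rw [pd_mul (cdAt (contDiff_coord (ehat k))) (cdAt (hs1 k)), pd_coord]
  simp [hb k]

lemma Jmem.eval_zero {f : Pt n → ℝ} (hf : Jmem f) : f 0 = 0 := by
  obtain ⟨h1, hs1, rfl⟩ := hf
  simp

end Jm

section JmGamma
variable {n N : ℕ} (A : Fin N → Matrix (Fin n) (Fin n) ℝ)

lemma Jmem_ut (i : Fin n) : Jmem (ut A i) :=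
  ⟨fun j x => ∑ α : Fin N, A α i j * (α.1 + 1) * x (q1 n) ^ α.1,
    fun j => ContDiff.sum fun α _ => contDiff_const.mul ((contDiff_coord (q1 n)).pow _),
    rfl⟩

lemma Jmem_dF (b : Fin (n+4)) : Jmem (fun x => ∑ k, if b = ehat k then 2 * x (ehat k) else 0) :=
  ⟨fun k _ => if b = ehat k then 2 else 0,
    fun k => contDiff_const, by
      funext x; refine Finset.sum_congr rfl fun k _ => ?_
      by_cases hbk : b = ehat k <;> simp [hbk] <;> ring⟩

lemma pg_row_q1 (b c : Fin (n+4)) : pg A b (q1 n) c =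
    fun x => (if c = q1 n then 1 else 0) * (∑ k, if b = ehat k then 2 * x (ehat k) else 0) := by
  funext x; simp [pg]

lemma pg_col_q1 (b d : Fin (n+4)) : pg A b d (q1 n) =
    fun x => (if d = q1 n then 1 else 0) * (∑ k, if b = ehat k then 2 * x (ehat k) else 0) := by
  funext x; simp [pg]

lemma Jmem_pg_b_q1 (d c : Fin (n+4)) : Jmem (pg A (q1 n) d c) := by
  have : pg A (q1 n) d c = fun x => ∑ i : Fin n,
      (if (d = ehat i ∧ c = q2 n) ∨ (d = q2 n ∧ c = ehat i) then (1:ℝ) else 0) * ut A i x := by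
    funext x; simp [pg]
  rw [this]
  exact Jmem.sum _ fun i _ => (Jmem_ut A i).const_mul _

lemma Jmem_pg_row_q1 (b c : Fin (n+4)) : Jmem (pg A b (q1 n) c) := by
  rw [pg_row_q1]; exact (Jmem_dF b).const_mul _

lemma Jmem_pg_col_q1 (b d : Fin (n+4)) : Jmem (pg A b d (q1 n)) := by
  rw [pg_col_q1]; exact (Jmem_dF b).const_mul _

lemma Jmem_Γ_mid (a c : Fin (n+4)) : Jmem (Γchr A a (q1 n) c) := by
  rw [Γchr_eq]
  refine Jmem.const_mul _ (Jmem.sum _ fun d _ => Jmem.mul_left (contDiff_Ginv A a d) ?_)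
  exact ((Jmem_pg_b_q1 A d c).add (Jmem_pg_row_q1 A c d)).sub (Jmem_pg_row_q1 A d c)

lemma Jmem_Γ_right (a c : Fin (n+4)) : Jmem (Γchr A a c (q1 n)) := by
  rw [Γchr_eq]
  refine Jmem.const_mul _ (Jmem.sum _ fun d _ => Jmem.mul_left (contDiff_Ginv A a d) ?_)
  exact ((Jmem_pg_col_q1 A c d).add (Jmem_pg_b_q1 A c d)).sub (Jmem_pg_col_q1 A d c)

end JmGamma
section Eqns
variable {n N : ℕ} (A : Fin N → Matrix (Fin n) (Fin n) ℝ)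

lemma covRAux_nil (a b c d : Fin (n+4)) (x : Pt n) :
    covRAux A a b c d [] x = Rcurv A a b c d x := by
  rw [covRAux]

lemma covRAux_cons (a b c d f : Fin (n+4)) (fs : List (Fin (n+4))) (x : Pt n) :
    covRAux A a b c d (f :: fs) x =
      pd f (covRAux A a b c d fs) x
      + ∑ l : Fin (n + 4), Γchr A a f l x * covRAux A l b c d fs x
      - ∑ l : Fin (n + 4), Γchr A l f b x * covRAux A a l c d fs x
      - ∑ l : Fin (n + 4), Γchr A l f c x * covRAux A a b l d fs x
      - ∑ l : Fin (n + 4), Γchr A l f d x * covRAux A a b c l fs x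
      - ∑ s : Fin fs.length, ∑ l : Fin (n + 4),
          Γchr A l f (fs.get s) x * covRAux A a b c d (fs.set s l) x := by
  rw [covRAux]

end Eqns
section Poly
open Polynomial
variable {n N : ℕ} (A : Fin N → Matrix (Fin n) (Fin n) ℝ)

/-- The polynomial `Σ_α (A_α)_{ij} t^{α+1}` (equal to `∂_ĵ u^î` as function of `t`). -/
noncomputable def Pb (i j : Fin n) : Polynomial ℝ :=
  ∑ α : Fin N, Polynomial.C (A α i j) * Polynomial.X ^ (α.1 + 1)

lemma Bfun_eval (i j : Fin n) (x : Pt n) : Bfun A i j x = (Pb A i j).eval (x (q1 n)) := by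
  simp [Bfun, Pb, Polynomial.eval_finset_sum]

lemma contDiff_polyEval (p : Polynomial ℝ) :
    ContDiff ℝ (⊤ : ℕ∞) (fun x : Pt n => p.eval (x (q1 n))) := by
  induction p using Polynomial.induction_on' with
  | add p q hp hq => simpa [Polynomial.eval_add] using hp.add hq
  | monomial k c =>
    simpa [Polynomial.eval_monomial] using contDiff_const.mul ((contDiff_coord (q1 n)).pow k)

lemma pd_polyEval (p : Polynomial ℝ) (b : Fin (n+4)) (x : Pt n) :
    pd b (fun x : Pt n => p.eval (x (q1 n))) x
      = (if (q1 n : Fin (n+4)) = b then 1 else 0) * p.derivative.eval (x (q1 n)) := by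
  have h : HasFDerivAt (fun x : Pt n => p.eval (x (q1 n)))
      ((p.derivative.eval (x (q1 n))) • prj (q1 n)) x := by
    simpa [Function.comp_def] using
      (p.hasDerivAt (x (q1 n))).comp_hasFDerivAt x (hasFDerivAt_coord (q1 n) x)
  rw [pd, h.fderiv]
  simp [mul_comm]

end Poly

section Smooth
variable {n N : ℕ} (A : Fin N → Matrix (Fin n) (Fin n) ℝ)

lemma contDiff_Rcurv (a b c d : Fin (n+4)) : ContDiff ℝ (⊤ : ℕ∞) (Rcurv A a b c d) := by
  show ContDiff ℝ (⊤ : ℕ∞) (fun x => pd c (Γchr A a d b) x - pd d (Γchr A a c b) x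
    + ∑ e : Fin (n + 4), (Γchr A a c e x * Γchr A e d b x - Γchr A a d e x * Γchr A e c b x))
  exact ((contDiff_pd (contDiff_Γchr A a d b)).sub (contDiff_pd (contDiff_Γchr A a c b))).add
    (ContDiff.sum fun e _ => ((contDiff_Γchr A a c e).mul (contDiff_Γchr A e d b)).sub
      ((contDiff_Γchr A a d e).mul (contDiff_Γchr A e c b)))

lemma contDiff_covRAux : ∀ (m : ℕ) (fs : List (Fin (n+4))), fs.length = m →
    ∀ a b c d, ContDiff ℝ (⊤ : ℕ∞) (covRAux A a b c d fs) := by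
  intro m
  induction m with
  | zero =>
    intro fs hfs a b c d
    rw [List.length_eq_zero_iff] at hfs
    subst hfs
    have : covRAux A a b c d [] = Rcurv A a b c d := funext fun x => covRAux_nil A a b c d x
    rw [this]
    exact contDiff_Rcurv A a b c d
  | succ m ih =>
    intro fs hfs a b c d
    rcases fs with _ | ⟨f, fs⟩
    · simp at hfs
    have hlen : fs.length = m := by simpa using hfs
    have hcd : ∀ a b c d, ContDiff ℝ (⊤ : ℕ∞) (covRAux A a b c d fs) := fun a b c d => ih fs hlen a b c d
    have hunf : covRAux A a b c d (f :: fs) = (fun x =>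
      pd f (covRAux A a b c d fs) x
      + ∑ l : Fin (n + 4), Γchr A a f l x * covRAux A l b c d fs x
      - ∑ l : Fin (n + 4), Γchr A l f b x * covRAux A a l c d fs x
      - ∑ l : Fin (n + 4), Γchr A l f c x * covRAux A a b l d fs x
      - ∑ l : Fin (n + 4), Γchr A l f d x * covRAux A a b c l fs x
      - ∑ s : Fin fs.length, ∑ l : Fin (n + 4),
          Γchr A l f (fs.get s) x * covRAux A a b c d (fs.set s l) x) :=
      funext fun x => covRAux_cons A a b c d f fs x
    rw [hunf]
    refine ContDiff.sub (ContDiff.sub (ContDiff.sub (ContDiff.sub (ContDiff.add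
      (contDiff_pd (hcd a b c d))
      (ContDiff.sum fun l _ => (contDiff_Γchr A a f l).mul (hcd l b c d)))
      (ContDiff.sum fun l _ => (contDiff_Γchr A l f b).mul (hcd a l c d)))
      (ContDiff.sum fun l _ => (contDiff_Γchr A l f c).mul (hcd a b l d)))
      (ContDiff.sum fun l _ => (contDiff_Γchr A l f d).mul (hcd a b c l)))
      (ContDiff.sum fun s _ => ContDiff.sum fun l _ =>
        (contDiff_Γchr A l f (fs.get s)).mul (ih (fs.set s l) (by simpa using hlen) a b c d))

end Smooth
section Special
variable {n N : ℕ} (A : Fin N → Matrix (Fin n) (Fin n) ℝ)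

lemma Γ_special (hA : ∀ α, (A α)ᵀ = -A α) (i j : Fin n) :
    Γchr A (ehat i) (q2 n) (ehat j) = Bfun A i j := by
  have hAji : ∀ α, A α j i = -(A α i j) := fun α => by
    have := congrFun (congrFun (hA α) i) j
    simpa [Matrix.transpose_apply] using this
  funext x
  rw [Γchr_eq']
  rw [sum_split (fun d => Ginv A x (ehat i) d *
    (pg A (q2 n) d (ehat j) x + pg A (ehat j) (q2 n) d x - pg A d (q2 n) (ehat j) x))]
  simp [Ginv_p1, Ginv_p2, Ginv_ehat, Ginv_q1, Ginv_q2, pg, ite_and, Finset.sum_ite_eq,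
    Finset.sum_ite_eq', Finset.mul_sum, mul_ite, ite_mul, Finset.sum_sub_distrib, hAji,
    Bfun]
  ring

end Special
section Main
open Polynomial
variable {n N : ℕ} (A : Fin N → Matrix (Fin n) (Fin n) ℝ)

lemma Rcurv_base (hA : ∀ α, (A α)ᵀ = -A α) (i j : Fin n) :
    ∃ e, Jmem e ∧ covRAux A (ehat i) (ehat j) (q1 n) (q2 n) [] = fun x =>
      (derivative (Pb A i j)).eval (x (q1 n)) + e x := by
  have hmain : pd (q1 n) (Γchr A (ehat i) (q2 n) (ehat j)) = fun x =>
      (derivative (Pb A i j)).eval (x (q1 n)) := by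
    rw [Γ_special A hA i j]
    have hB : Bfun A i j = fun x : Pt n => (Pb A i j).eval (x (q1 n)) :=
      funext fun x => Bfun_eval A i j x
    rw [hB]
    funext x
    rw [pd_polyEval]
    simp
  refine ⟨fun x => - pd (q2 n) (Γchr A (ehat i) (q1 n) (ehat j)) x
      + ∑ e : Fin (n+4), (Γchr A (ehat i) (q1 n) e x * Γchr A e (q2 n) (ehat j) x
        - Γchr A (ehat i) (q2 n) e x * Γchr A e (q1 n) (ehat j) x), ?_, ?_⟩
  · refine Jmem.add ?_ (Jmem.sum _ fun e _ => Jmem.sub ?_ ?_)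
    · exact (Jmem_pd (fun k => ehat_ne_q2 k) (Jmem_Γ_mid A (ehat i) (ehat j))).neg
    · exact (Jmem_Γ_mid A (ehat i) e).mul_right (contDiff_Γchr A e (q2 n) (ehat j))
    · exact (Jmem_Γ_mid A e (ehat j)).mul_left (contDiff_Γchr A (ehat i) (q2 n) e)
  · funext x
    rw [covRAux_nil]
    simp only [Rcurv]
    rw [congrFun hmain x]
    ring

lemma main_ind (hA : ∀ α, (A α)ᵀ = -A α) (i j : Fin n) : ∀ m : ℕ, ∃ e, Jmem e ∧
    covRAux A (ehat i) (ehat j) (q1 n) (q2 n) (List.replicate m (q1 n)) = fun x =>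
      (derivative^[m+1] (Pb A i j)).eval (x (q1 n)) + e x := by
  intro m
  induction m with
  | zero => simpa using Rcurv_base A hA i j
  | succ m ih =>
    obtain ⟨e, he, heq⟩ := ih
    refine ⟨fun x =>
        pd (q1 n) e x
        + ∑ l : Fin (n + 4), Γchr A (ehat i) (q1 n) l x *
            covRAux A l (ehat j) (q1 n) (q2 n) (List.replicate m (q1 n)) x
        - ∑ l : Fin (n + 4), Γchr A l (q1 n) (ehat j) x *
            covRAux A (ehat i) l (q1 n) (q2 n) (List.replicate m (q1 n)) x
        - ∑ l : Fin (n + 4), Γchr A l (q1 n) (q1 n) x *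
            covRAux A (ehat i) (ehat j) l (q2 n) (List.replicate m (q1 n)) x
        - ∑ l : Fin (n + 4), Γchr A l (q1 n) (q2 n) x *
            covRAux A (ehat i) (ehat j) (q1 n) l (List.replicate m (q1 n)) x
        - ∑ s : Fin (List.replicate m (q1 n)).length, ∑ l : Fin (n + 4),
            Γchr A l (q1 n) ((List.replicate m (q1 n)).get s) x *
              covRAux A (ehat i) (ehat j) (q1 n) (q2 n)
                ((List.replicate m (q1 n)).set s l) x, ?_, ?_⟩
    · refine Jmem.sub (Jmem.sub (Jmem.sub (Jmem.sub (Jmem.add ?_ ?_) ?_) ?_) ?_) ?_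
      · exact Jmem_pd (fun k => ehat_ne_q1 k) he
      · exact Jmem.sum _ fun l _ => (Jmem_Γ_mid A (ehat i) l).mul_right
          (contDiff_covRAux A _ _ rfl _ _ _ _)
      · exact Jmem.sum _ fun l _ => (Jmem_Γ_mid A l (ehat j)).mul_right
          (contDiff_covRAux A _ _ rfl _ _ _ _)
      · exact Jmem.sum _ fun l _ => (Jmem_Γ_mid A l (q1 n)).mul_right
          (contDiff_covRAux A _ _ rfl _ _ _ _)
      · exact Jmem.sum _ fun l _ => (Jmem_Γ_mid A l (q2 n)).mul_right
          (contDiff_covRAux A _ _ rfl _ _ _ _)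
      · exact Jmem.sum _ fun s _ => Jmem.sum _ fun l _ =>
          (Jmem_Γ_mid A l _).mul_right (contDiff_covRAux A _ _ rfl _ _ _ _)
    · funext x
      rw [List.replicate_succ, covRAux_cons, heq,
        pd_add (cdAt (contDiff_polyEval _)) (cdAt he.contDiff), pd_polyEval]
      simp only [Function.iterate_succ_apply', eq_self_iff_true, if_true, one_mul]
      ring

end Main

/-- At the origin, `R^î_{ĵ,n+3,n+4;n+3;…;n+3}(0) = r! (A_r)_{î−2,ĵ−2}`
(with `r−1` occurrences of the index `n+3`), for `1 ≤ r ≤ N`. -/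
theorem statement17 (n N : ℕ) (hn : 1 ≤ n) (hN : 1 ≤ N)
    (A : Fin N → Matrix (Fin n) (Fin n) ℝ) (hA : ∀ α, (A α)ᵀ = -A α)
    (r : ℕ) (hr1 : 1 ≤ r) (hrN : r ≤ N) (i j : Fin n) :
    covR A (ehat i) (ehat j) (q1 n) (q2 n) (List.replicate (r - 1) (q1 n)) (0 : Pt n)
      = (Nat.factorial r : ℝ) * A ⟨r - 1, by omega⟩ i j := by
  obtain ⟨e, he, heq⟩ := main_ind A hA i j (r - 1)
  have hrev : (List.replicate (r - 1) (q1 n)).reverse = List.replicate (r - 1) (q1 n) :=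
    List.reverse_replicate
  rw [covR, hrev, heq]
  simp only []
  show Polynomial.eval ((0 : Pt n) (q1 n)) ((⇑Polynomial.derivative)^[r - 1 + 1] (Pb A i j)) + e 0 = _
  rw [he.eval_zero]
  have h0 : (0 : Pt n) (q1 n) = 0 := rfl
  rw [h0, add_zero]
  have h1 : r - 1 + 1 = r := by omega
  rw [h1]
  rw [← Polynomial.coeff_zero_eq_eval_zero, Polynomial.coeff_iterate_derivative]
  have hcoef : (Pb A i j).coeff r = A ⟨r - 1, by omega⟩ i j := by
    rw [Pb, Polynomial.finset_sum_coeff]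
    rw [Finset.sum_eq_single (⟨r - 1, by omega⟩ : Fin N)]
    · simp [Polynomial.coeff_C_mul, Polynomial.coeff_X_pow, h1]
    · intro α _ hα
      simp only [Polynomial.coeff_C_mul, Polynomial.coeff_X_pow]
      have : ¬ (r = α.1 + 1) := by
        intro hc
        apply hα
        apply Fin.ext
        simp
        omega
      simp [this]
    · intro h
      exact absurd (Finset.mem_univ _) h
  rw [Nat.zero_add, hcoef]
  simp [Nat.descFactorial_self, nsmul_eq_mul]

end
end HolPaper
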